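/- arXiv:math/0209314 — 5 statements merged into one kernel-verified Lean document; each statement's English description precedes it below -/
import Mathlib

section
/- Let L_d : (ℝ × ℝ^n) × (ℝ × ℝ^n) → ℝ be a smooth discrete Lagrangian, and let S(c) = Σ_{k=0}^{N−1} L_d(t_k,q_k,t_{k+1},q_{k+1}) be the extended discrete action of a discrete path c = ((t₀,q₀),…,(t_N,q_N)). Then the derivative of S at c in the direction of a variation δc = ((δt₀,δq₀),…,(δt_N,δq_N)) equals Σ_{k=1}^{N−1} [ (D₄L_d(c_{k−1},c_k) + D₂L_d(c_k,c_{k+1}))·δq_k + (D₃L_d(c_{k−1},c_k) + D₁L_d(c_k,c_{k+1}))·δt_k ] + [D₄L_d(c_{N−1},c_N)·δq_N + D₃L_d(c_{N−1},c_N)·δt_N] − [−D₂L_d(c₀,c₁)·δq₀ − D₁L_d(c₀,c₁)·δt₀], i.e. dS splits into the interior discrete Euler-Lagrange terms plus boundary one-form terms Θ⁺ evaluated at (c_{N−1},c_N) and −Θ⁻ evaluated at (c₀,c₁). -/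
noncomputable section

/-- The extended configuration space `Q̄ = ℝ × Q` with `Q = ℝⁿ`. -/
abbrev Qb (n : ℕ) := ℝ × (Fin n → ℝ)

/-- `Q̄ × Q̄`, the extended discrete state space. -/
abbrev Eb (n : ℕ) := Qb n × Qb n

/-- `D₁ L`: partial derivative with respect to `t₀`. -/
def D1 {n : ℕ} (L : Eb n → ℝ) (x : Eb n) : ℝ :=
  fderiv ℝ L x ((1, 0), (0, 0))

/-- `D₂ L`: partial derivative with respect to `q₀`, in direction `δq`. -/
def D2 {n : ℕ} (L : Eb n → ℝ) (x : Eb n) (δq : Fin n → ℝ) : ℝ :=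
  fderiv ℝ L x ((0, δq), (0, 0))

/-- `D₃ L`: partial derivative with respect to `t₁`. -/
def D3 {n : ℕ} (L : Eb n → ℝ) (x : Eb n) : ℝ :=
  fderiv ℝ L x ((0, 0), (1, 0))

/-- `D₄ L`: partial derivative with respect to `q₁`, in direction `δq`. -/
def D4 {n : ℕ} (L : Eb n → ℝ) (x : Eb n) (δq : Fin n → ℝ) : ℝ :=
  fderiv ℝ L x ((0, 0), (0, δq))

/-- The discrete Lagrangian one-form `Θ⁺ = D₄L dq₁ + D₃L dt₁`. -/
def ThetaPlus {n : ℕ} (L : Eb n → ℝ) (x : Eb n) (v : Eb n) : ℝ :=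
  D4 L x v.2.2 + D3 L x * v.2.1

/-- The discrete Lagrangian one-form `Θ⁻ = −D₂L dq₀ − D₁L dt₀`. -/
def ThetaMinus {n : ℕ} (L : Eb n → ℝ) (x : Eb n) (v : Eb n) : ℝ :=
  -(D2 L x v.1.2) - D1 L x * v.1.1

/-- The discrete energy `E⁺ = −D₃ L`. -/
def Eplus {n : ℕ} (L : Eb n → ℝ) (x : Eb n) : ℝ := -(D3 L x)

/-- The discrete energy `E⁻ = D₁ L`. -/
def Eminus {n : ℕ} (L : Eb n → ℝ) (x : Eb n) : ℝ := D1 L x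

lemma clm_decomp {n : ℕ} (f : Eb n →L[ℝ] ℝ) (t0 t1 : ℝ) (q0 q1 : Fin n → ℝ) :
    f ((t0, q0), (t1, q1)) = t0 * f ((1,0),(0,0)) + f ((0,q0),(0,0))
      + t1 * f ((0,0),(1,0)) + f ((0,0),(0,q1)) := by
  have hv : ((t0, q0), (t1, q1)) = t0 • (((1,0),(0,0)) : Eb n) + ((0,q0),(0,0))
      + t1 • ((0,0),(1,0)) + ((0,0),(0,q1)) := by
    simp [Prod.ext_iff]
  rw [hv, map_add, map_add, map_add, map_smul, map_smul]
  simp [smul_eq_mul]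

lemma term_deriv {n : ℕ} (L : Eb n → ℝ) (hL : ContDiff ℝ (⊤ : ℕ∞) L) (a b u v : Qb n) :
    HasDerivAt (fun s : ℝ => L (a + s • u, b + s • v))
      (u.1 * D1 L (a, b) + D2 L (a, b) u.2 + v.1 * D3 L (a, b) + D4 L (a, b) v.2) 0 := by
  have h1 : HasDerivAt (fun s : ℝ => a + s • u) u 0 := by
    simpa using ((hasDerivAt_id (0:ℝ)).smul_const u).const_add a
  have h2 : HasDerivAt (fun s : ℝ => b + s • v) v 0 := by
    simpa using ((hasDerivAt_id (0:ℝ)).smul_const v).const_add b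
  have hg : HasDerivAt (fun s : ℝ => ((a + s • u, b + s • v) : Eb n)) (u, v) 0 := h1.prodMk h2
  have hF : HasFDerivAt L (fderiv ℝ L (a, b)) (a + (0:ℝ) • u, b + (0:ℝ) • v) := by
    simpa using ((hL.differentiable (by simp)) (a, b)).hasFDerivAt
  have hc := hF.comp_hasDerivAt (0:ℝ) hg
  have hd : fderiv ℝ L (a, b) (u, v)
      = u.1 * D1 L (a, b) + D2 L (a, b) u.2 + v.1 * D3 L (a, b) + D4 L (a, b) v.2 := by
    simpa [D1, D2, D3, D4] using clm_decomp (fderiv ℝ L (a, b)) u.1 v.1 u.2 v.2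
  simpa [hd, Function.comp_def] using hc

lemma sum_split {n : ℕ} (L : Eb n → ℝ) (c δc : ℕ → Qb n) :
    ∀ N, 1 ≤ N →
    (∑ k ∈ Finset.range N,
        ((δc k).1 * D1 L (c k, c (k+1)) + D2 L (c k, c (k+1)) (δc k).2
          + (δc (k+1)).1 * D3 L (c k, c (k+1)) + D4 L (c k, c (k+1)) (δc (k+1)).2))
    = (∑ k ∈ Finset.Ico 1 N,
          ((D4 L (c (k - 1), c k) (δc k).2 + D2 L (c k, c (k + 1)) (δc k).2)
            + (D3 L (c (k - 1), c k) + D1 L (c k, c (k + 1))) * (δc k).1))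
        + (D4 L (c (N - 1), c N) (δc N).2 + D3 L (c (N - 1), c N) * (δc N).1)
        - (-(D2 L (c 0, c 1) (δc 0).2) - D1 L (c 0, c 1) * (δc 0).1) := by
  intro N hN
  induction N, hN using Nat.le_induction with
  | base =>
    simp
    ring
  | succ N hN ih =>
    rw [Finset.sum_range_succ, ih, Finset.sum_Ico_succ_top hN, Nat.add_sub_cancel]
    ring

/-- derivative of the extended discrete action sum
`S(c) = Σ_{k=0}^{N−1} L_d(c_k, c_{k+1})` at a path `c` in the direction of a
variation `δc`: it splits into the interior discrete Euler–Lagrange terms plus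
the boundary terms `Θ⁺(c_{N−1},c_N)·δc − Θ⁻(c₀,c₁)·δc`. -/
theorem stmt1 (n N : ℕ) (hN : 1 ≤ N) (L : Eb n → ℝ) (hL : ContDiff ℝ (⊤ : ℕ∞) L)
    (c δc : ℕ → Qb n) :
    HasDerivAt
      (fun s : ℝ => ∑ k ∈ Finset.range N, L (c k + s • δc k, c (k + 1) + s • δc (k + 1)))
      ((∑ k ∈ Finset.Ico 1 N,
          ((D4 L (c (k - 1), c k) (δc k).2 + D2 L (c k, c (k + 1)) (δc k).2)
            + (D3 L (c (k - 1), c k) + D1 L (c k, c (k + 1))) * (δc k).1))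
        + (D4 L (c (N - 1), c N) (δc N).2 + D3 L (c (N - 1), c N) * (δc N).1)
        - (-(D2 L (c 0, c 1) (δc 0).2) - D1 L (c 0, c 1) * (δc 0).1))
      0 := by
  rw [← sum_split L c δc N hN]
  exact HasDerivAt.fun_sum fun k _ => term_deriv L hL (c k) (c (k+1)) (δc k) (δc (k+1))
end
end

section
/- Let G act smoothly on Q̄ = ℝ × ℝ^n with diagonal action Ψ_g on Q̄ × Q̄, and suppose L_d : Q̄ × Q̄ → ℝ is G-invariant: L_d ∘ Ψ_g = L_d for all g ∈ G. Then the discrete Lagrangian one-forms are invariant: Ψ_g^* Θ⁺_{L_d} = Θ⁺_{L_d} and Ψ_g^* Θ⁻_{L_d} = Θ⁻_{L_d} for all g ∈ G. -/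
noncomputable section

lemma thetaPlus_eq {n : ℕ} (L : Eb n → ℝ) (x v : Eb n) :
    ThetaPlus L x v = fderiv ℝ L x ((0 : Qb n), v.2) := by
  have h : ((0 : Qb n), v.2) =
      (((0, 0), (0, v.2.2)) : Eb n) + v.2.1 • (((0, 0), (1, 0)) : Eb n) := by
    simp [Prod.ext_iff]
  rw [h, map_add, map_smul]
  simp [ThetaPlus, D3, D4, smul_eq_mul, mul_comm]

lemma thetaMinus_eq {n : ℕ} (L : Eb n → ℝ) (x v : Eb n) :
    ThetaMinus L x v = -(fderiv ℝ L x (v.1, (0 : Qb n))) := by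
  have h : (v.1, (0 : Qb n)) =
      (((0, v.1.2), (0, 0)) : Eb n) + v.1.1 • (((1, 0), (0, 0)) : Eb n) := by
    simp [Prod.ext_iff]
  rw [h, map_add, map_smul]
  simp [ThetaMinus, D1, D2, smul_eq_mul, mul_comm]
  ring

lemma key_snd {n : ℕ} {φ : Qb n → Qb n} (hφ : ContDiff ℝ (⊤ : ℕ∞) φ)
    (L : Eb n → ℝ) (hL : ContDiff ℝ (⊤ : ℕ∞) L) (x : Eb n)
    (hinv : ∀ (x₀ x₁ : Qb n), L (φ x₀, φ x₁) = L (x₀, x₁)) (w : Qb n) :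
    fderiv ℝ L (φ x.1, φ x.2) ((0 : Qb n), fderiv ℝ φ x.2 w)
      = fderiv ℝ L x ((0 : Qb n), w) := by
  have hφd : HasFDerivAt φ (fderiv ℝ φ x.2) x.2 :=
    (hφ.differentiable (by simp) x.2).hasFDerivAt
  have hLd : HasFDerivAt L (fderiv ℝ L (φ x.1, φ x.2)) (φ x.1, φ x.2) :=
    (hL.differentiable (by simp) _).hasFDerivAt
  have h1 : HasFDerivAt (fun a => (φ x.1, φ a))
      ((0 : Qb n →L[ℝ] Qb n).prod (fderiv ℝ φ x.2)) x.2 :=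
    HasFDerivAt.prodMk (hasFDerivAt_const (φ x.1) x.2) hφd
  have h2 := hLd.comp x.2 h1
  have h3 : (fun a => L (φ x.1, φ a)) = fun a => L (x.1, a) := by
    funext a; exact hinv x.1 a
  simp only [Function.comp_def] at h2
  rw [h3] at h2
  have hLd' : HasFDerivAt L (fderiv ℝ L (x.1, x.2)) (x.1, x.2) :=
    (hL.differentiable (by simp) _).hasFDerivAt
  have h4 : HasFDerivAt (fun a : Qb n => (x.1, a))
      ((0 : Qb n →L[ℝ] Qb n).prod (ContinuousLinearMap.id ℝ (Qb n))) x.2 :=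
    HasFDerivAt.prodMk (hasFDerivAt_const x.1 x.2) (hasFDerivAt_id x.2)
  have h5 := hLd'.comp x.2 h4
  have := h2.unique h5
  have happ := congrArg (fun f => f w) (congrArg DFunLike.coe this)
  simpa using happ

lemma key_fst {n : ℕ} {φ : Qb n → Qb n} (hφ : ContDiff ℝ (⊤ : ℕ∞) φ)
    (L : Eb n → ℝ) (hL : ContDiff ℝ (⊤ : ℕ∞) L) (x : Eb n)
    (hinv : ∀ (x₀ x₁ : Qb n), L (φ x₀, φ x₁) = L (x₀, x₁)) (w : Qb n) :
    fderiv ℝ L (φ x.1, φ x.2) (fderiv ℝ φ x.1 w, (0 : Qb n))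
      = fderiv ℝ L x (w, (0 : Qb n)) := by
  have hφd : HasFDerivAt φ (fderiv ℝ φ x.1) x.1 :=
    (hφ.differentiable (by simp) x.1).hasFDerivAt
  have hLd : HasFDerivAt L (fderiv ℝ L (φ x.1, φ x.2)) (φ x.1, φ x.2) :=
    (hL.differentiable (by simp) _).hasFDerivAt
  have h1 : HasFDerivAt (fun a => (φ a, φ x.2))
      ((fderiv ℝ φ x.1).prod (0 : Qb n →L[ℝ] Qb n)) x.1 :=
    HasFDerivAt.prodMk hφd (hasFDerivAt_const (φ x.2) x.1)
  have h2 := hLd.comp x.1 h1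
  have h3 : (fun a => L (φ a, φ x.2)) = fun a => L (a, x.2) := by
    funext a; exact hinv a x.2
  simp only [Function.comp_def] at h2
  rw [h3] at h2
  have hLd' : HasFDerivAt L (fderiv ℝ L (x.1, x.2)) (x.1, x.2) :=
    (hL.differentiable (by simp) _).hasFDerivAt
  have h4 : HasFDerivAt (fun a : Qb n => (a, x.2))
      (((ContinuousLinearMap.id ℝ (Qb n))).prod (0 : Qb n →L[ℝ] Qb n)) x.1 :=
    HasFDerivAt.prodMk (hasFDerivAt_id x.1) (hasFDerivAt_const x.2 x.1)
  have h5 := hLd'.comp x.1 h4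
  have := h2.unique h5
  have happ := congrArg (fun f => f w) (congrArg DFunLike.coe this)
  simpa using happ

/-- if `L_d` is invariant under the diagonal action `Ψ_g` of a
group `G` acting smoothly on `Q̄` via `ψ`, then the discrete Lagrangian
one-forms are invariant: `Ψ_g^* Θ± = Θ±`.  The pullback is expressed pointwise:
`Θ±` at `Ψ_g x` paired with the image of `v` under the differential of `Ψ_g`
equals `Θ±` at `x` paired with `v`. -/
theorem stmt4 (n : ℕ) (G : Type*) [Group G] (ψ : G → Qb n → Qb n)
    (hψ : ∀ g, ContDiff ℝ (⊤ : ℕ∞) (ψ g))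
    (hact1 : ∀ x, ψ 1 x = x)
    (hactm : ∀ g h x, ψ (g * h) x = ψ g (ψ h x))
    (L : Eb n → ℝ) (hL : ContDiff ℝ (⊤ : ℕ∞) L)
    (hinv : ∀ g (x₀ x₁ : Qb n), L (ψ g x₀, ψ g x₁) = L (x₀, x₁)) :
    ∀ (g : G) (x v : Eb n),
      ThetaPlus L (ψ g x.1, ψ g x.2) (fderiv ℝ (ψ g) x.1 v.1, fderiv ℝ (ψ g) x.2 v.2)
          = ThetaPlus L x v ∧
      ThetaMinus L (ψ g x.1, ψ g x.2) (fderiv ℝ (ψ g) x.1 v.1, fderiv ℝ (ψ g) x.2 v.2)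
          = ThetaMinus L x v := by
  intro g x v
  constructor
  · rw [thetaPlus_eq, thetaPlus_eq]
    exact key_snd (hψ g) L hL x (fun a b => hinv g a b) v.2
  · rw [thetaMinus_eq, thetaMinus_eq]
    rw [key_fst (hψ g) L hL x (fun a b => hinv g a b) v.1]
end
end

section
/- Discrete nonholonomic Noether theorem for horizontal symmetries: Let (L_d, 𝒟_d, 𝒟) be an extended discrete nonholonomic Lagrangian system on Q̄ = ℝ × ℝ^n invariant under a Lie group action, and let ξ ∈ 𝔤 be a horizontal symmetry, i.e. ξ_{Q̄}(t,q) ∈ 𝒟_{(t,q)} for all (t,q). Suppose a sequence (t_k,q_k) satisfies the extended discrete Lagrange–d'Alembert equations: for 1 ≤ k ≤ N−1, the discrete Euler–Lagrange map D_DEL L_d(t_{k−1},q_{k−1},t_k,q_k,t_{k+1},q_{k+1}) annihilates every vector in 𝒟_{(t_k,q_k)}, and (t_k,q_k,t_{k+1},q_{k+1}) ∈ 𝒟_d. Then the component of the discrete momentum map along ξ is conserved: ⟨Θ⁺_{L_d}(t_k,q_k,t_{k+1},q_{k+1}), ξ_{Q̄×Q̄}⟩ = ⟨Θ⁺_{L_d}(t_{k−1},q_{k−1},t_k,q_k),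 ξ_{Q̄×Q̄}⟩. -/
noncomputable section

/-- discrete nonholonomic Noether theorem for horizontal
symmetries.  `𝒟` is the constraint distribution on `Q̄`, `𝒟d` the discrete
constraint set, `ξQ` the infinitesimal generator of a horizontal symmetry
(`ξQ x ∈ 𝒟 x` everywhere) of the invariant system (infinitesimal invariance of
`L_d`).  If the sequence satisfies the extended discrete Lagrange–d'Alembert
equations (the discrete Euler–Lagrange map annihilates every vector of
`𝒟_{(t_k,q_k)}` and `(c_k, c_{k+1}) ∈ 𝒟d`), then the `ξ`-component of the
discrete momentum `⟨Θ⁺, ξ_{Q̄×Q̄}⟩` is conserved. -/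
theorem stmt8 (n N : ℕ) (L : Eb n → ℝ) (hL : ContDiff ℝ (⊤ : ℕ∞) L)
    (𝒟 : Qb n → Submodule ℝ (Qb n)) (𝒟d : Set (Eb n))
    (ξQ : Qb n → Qb n)
    (hhor : ∀ x, ξQ x ∈ 𝒟 x)
    (hinv : ∀ x : Eb n, fderiv ℝ L x (ξQ x.1, ξQ x.2) = 0)
    (c : ℕ → Qb n)
    (hEDLA1 : ∀ k, 1 ≤ k → k ≤ N - 1 → ∀ v ∈ 𝒟 (c k),
      fderiv ℝ L (c (k - 1), c k) ((0 : Qb n), v)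
        + fderiv ℝ L (c k, c (k + 1)) (v, (0 : Qb n)) = 0)
    (hEDLA2 : ∀ k, 1 ≤ k → k ≤ N - 1 → (c k, c (k + 1)) ∈ 𝒟d) :
    ∀ k, 1 ≤ k → k ≤ N - 1 →
      ThetaPlus L (c k, c (k + 1)) (ξQ (c k), ξQ (c (k + 1)))
        = ThetaPlus L (c (k - 1), c k) (ξQ (c (k - 1)), ξQ (c k)) := by
  intro k hk1 hk2
  have hTP : ∀ x v : Eb n, ThetaPlus L x v = fderiv ℝ L x ((0, 0), v.2) := by
    intro x v
    have h1 : (((0, 0), (0, v.2.2)) : Eb n) + v.2.1 • (((0, 0), (1, 0)) : Eb n)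
        = ((0, 0), v.2) := by
      simp [Prod.ext_iff]
    calc ThetaPlus L x v
        = fderiv ℝ L x ((0, 0), (0, v.2.2))
          + fderiv ℝ L x (v.2.1 • (((0, 0), (1, 0)) : Eb n)) := by
          rw [(fderiv ℝ L x).map_smul]
          simp [ThetaPlus, D3, D4, mul_comm, smul_eq_mul]
      _ = fderiv ℝ L x ((0, 0), v.2) := by rw [← (fderiv ℝ L x).map_add, h1]
  have hξ := hEDLA1 k hk1 hk2 (ξQ (c k)) (hhor _)
  have hinv1 := hinv (c k, c (k + 1))
  have hsplit : fderiv ℝ L (c k, c (k + 1)) (ξQ (c k), ξQ (c (k + 1)))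
      = fderiv ℝ L (c k, c (k + 1)) (ξQ (c k), (0 : Qb n))
        + fderiv ℝ L (c k, c (k + 1)) ((0 : Qb n), ξQ (c (k + 1))) := by
    rw [← (fderiv ℝ L (c k, c (k + 1))).map_add]
    simp
  rw [hTP, hTP]
  simp only [] at hinv1
  rw [hsplit] at hinv1
  have : fderiv ℝ L (c k, c (k + 1)) ((0 : Qb n), ξQ (c (k + 1)))
      = fderiv ℝ L (c (k - 1), c k) ((0 : Qb n), ξQ (c k)) := by linarith
  exact this
end
end

section
/- Evolution of the symplectic form under the nonholonomic integrator: Let (L_d, 𝒟_d, 𝒟) be an extended discrete nonholonomic system on Q̄ = ℝ × ℝ^n with 𝒟^o locally spanned by one-forms ω^a, a = 1,…,m, and suppose Φ : Q̄ × Q̄ → Q̄ × Q̄ is a smooth map such that for each x = (t₀,q₀,t₁,q₁), Φ(x) = (t₁,q₁,t₂,q₂) satisfies the EDLA equations with smooth multipliers λ_a(x): D₂L_d(t₁,q₁,t₂,q₂) + D₄L_d(t₀,q₀,t₁,q₁) = λ_a(x) ω^a(t₁,q₁) and D₁L_d(t₁,q₁,t₂,q₂) + D₃L_d(t₀,q₀,t₁,q₁)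 = 0. Then the two-step action S̃(x) = L_d(x) + L_d(Φ(x)) satisfies dS̃ = β_d + Φ^*Θ⁺_{L_d} − Θ⁻_{L_d}, where β_d(x) = λ_a(x) (pullback to Q̄ × Q̄ via (t₁,q₁) of ω^a), a one-form with values in the annihilator 𝒟^o; consequently Φ^*Ω_{L_d} = Ω_{L_d} + dβ_d. -/
noncomputable section

/-- The extended discrete Lagrangian two-form `Ω_{L_d} = −dΘ⁺_{L_d}`. -/
def OmegaL {n : ℕ} (L : Eb n → ℝ) (x : Eb n) (u v : Eb n) : ℝ :=
  -(fderiv ℝ (fun y => ThetaPlus L y v) x u - fderiv ℝ (fun y => ThetaPlus L y u) x v)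

namespace Stmt14Aux

variable {n : ℕ}

lemma fderiv_decomp (f : Eb n → ℝ) (x : Eb n) (v : Eb n) :
    fderiv ℝ f x v = D1 f x * v.1.1 + D2 f x v.1.2 + D3 f x * v.2.1 + D4 f x v.2.2 := by
  have hv : v = v.1.1 • (((1:ℝ), (0:Fin n → ℝ)), ((0:ℝ), (0:Fin n → ℝ)))
      + (((0:ℝ), v.1.2), ((0:ℝ), (0:Fin n → ℝ)))
      + v.2.1 • (((0:ℝ), (0:Fin n → ℝ)), ((1:ℝ), (0:Fin n → ℝ)))
      + (((0:ℝ), (0:Fin n → ℝ)), ((0:ℝ), v.2.2)) := by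
    ext <;> simp
  conv_lhs => rw [hv]
  rw [map_add, map_add, map_add, map_smul, map_smul]
  simp only [D1, D2, D3, D4, smul_eq_mul]
  ring

lemma thetaPlus_eq (L : Eb n → ℝ) (z w : Eb n) :
    ThetaPlus L z w = fderiv ℝ L z ((((0:ℝ), (0:Fin n → ℝ)) : Qb n), w.2) := by
  rw [show ((((0:ℝ), (0:Fin n → ℝ)) : Qb n), w.2)
      = w.2.1 • (((0:ℝ), (0:Fin n → ℝ)), ((1:ℝ), (0:Fin n → ℝ)))
        + (((0:ℝ), (0:Fin n → ℝ)), ((0:ℝ), w.2.2)) from by ext <;> simp]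
  rw [map_add, map_smul]
  simp only [ThetaPlus, D3, D4, smul_eq_mul]
  ring

lemma thetaMinus_eq (L : Eb n → ℝ) (z w : Eb n) :
    ThetaMinus L z w = -(fderiv ℝ L z (w.1, (((0:ℝ), (0:Fin n → ℝ)) : Qb n))) := by
  rw [show (w.1, (((0:ℝ), (0:Fin n → ℝ)) : Qb n))
      = w.1.1 • ((((1:ℝ), (0:Fin n → ℝ)) : Qb n), (((0:ℝ), (0:Fin n → ℝ)) : Qb n))
        + ((((0:ℝ), w.1.2) : Qb n), (((0:ℝ), (0:Fin n → ℝ)) : Qb n)) from by ext <;> simp]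
  rw [map_add, map_smul]
  simp only [ThetaMinus, D1, D2, smul_eq_mul]
  ring

lemma fderiv_clm_apply_const (f : Eb n → ℝ) (hf : ContDiff ℝ (⊤ : ℕ∞) f) (x w u : Eb n) :
    fderiv ℝ (fun y => fderiv ℝ f y w) x u = fderiv ℝ (fderiv ℝ f) x u w := by
  have h1 : DifferentiableAt ℝ (fderiv ℝ f) x :=
    ((hf.fderiv_right (m := 1) (WithTop.coe_le_coe.mpr le_top)).differentiable one_ne_zero x)
  rw [(h1.hasFDerivAt.clm_apply (hasFDerivAt_const w x)).fderiv]
  simp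

/-- `Ω_L` in terms of the second derivative of `L`. -/
lemma omega_eq (L : Eb n → ℝ) (hL : ContDiff ℝ (⊤ : ℕ∞) L) (z a b : Eb n) :
    OmegaL L z a b
      = -(fderiv ℝ (fderiv ℝ L) z a ((((0:ℝ), (0:Fin n → ℝ)) : Qb n), b.2)
          - fderiv ℝ (fderiv ℝ L) z b ((((0:ℝ), (0:Fin n → ℝ)) : Qb n), a.2)) := by
  have h1 : (fun y => ThetaPlus L y b)
      = fun y => fderiv ℝ L y ((((0:ℝ), (0:Fin n → ℝ)) : Qb n), b.2) :=
    funext fun y => thetaPlus_eq L y b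
  have h2 : (fun y => ThetaPlus L y a)
      = fun y => fderiv ℝ L y ((((0:ℝ), (0:Fin n → ℝ)) : Qb n), a.2) :=
    funext fun y => thetaPlus_eq L y a
  rw [OmegaL, h1, h2, fderiv_clm_apply_const L hL, fderiv_clm_apply_const L hL]

lemma fderiv_thetaMinus (L : Eb n → ℝ) (hL : ContDiff ℝ (⊤ : ℕ∞) L) (x w u : Eb n) :
    fderiv ℝ (fun y => ThetaMinus L y w) x u
      = -(fderiv ℝ (fderiv ℝ L) x u (w.1, (((0:ℝ), (0:Fin n → ℝ)) : Qb n))) := by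
  rw [show (fun y => ThetaMinus L y w)
      = fun y => -(fderiv ℝ L y (w.1, (((0:ℝ), (0:Fin n → ℝ)) : Qb n))) from
    funext fun y => thetaMinus_eq L y w]
  rw [fderiv_fun_neg]
  simp only [ContinuousLinearMap.neg_apply]
  rw [fderiv_clm_apply_const L hL]

lemma dPhi_fst (Φ : Eb n → Eb n) (hΦ : ContDiff ℝ (⊤ : ℕ∞) Φ)
    (hstep : ∀ x : Eb n, (Φ x).1 = x.2) (x v : Eb n) :
    (fderiv ℝ Φ x v).1 = v.2 := by
  have h1 : HasFDerivAt (fun y : Eb n => (Φ y).1)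
      ((ContinuousLinearMap.fst ℝ (Qb n) (Qb n)).comp (fderiv ℝ Φ x)) x :=
    (ContinuousLinearMap.fst ℝ (Qb n) (Qb n)).hasFDerivAt.comp x
      ((hΦ.differentiable (by simp) x).hasFDerivAt)
  have h2 : (fun y : Eb n => (Φ y).1) = fun y : Eb n => y.2 := funext hstep
  rw [h2] at h1
  have h3 : HasFDerivAt (fun y : Eb n => y.2) (ContinuousLinearMap.snd ℝ (Qb n) (Qb n)) x :=
    (ContinuousLinearMap.snd ℝ (Qb n) (Qb n)).hasFDerivAt
  have h4 := h1.unique h3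
  calc (fderiv ℝ Φ x v).1
      = ((ContinuousLinearMap.fst ℝ (Qb n) (Qb n)).comp (fderiv ℝ Φ x)) v := rfl
    _ = (ContinuousLinearMap.snd ℝ (Qb n) (Qb n)) v := by rw [h4]
    _ = v.2 := rfl

lemma part1 {m : ℕ} (L : Eb n → ℝ) (hL : ContDiff ℝ (⊤ : ℕ∞) L)
    (Φ : Eb n → Eb n) (hΦ : ContDiff ℝ (⊤ : ℕ∞) Φ)
    (ω : Fin m → Qb n → (Fin n → ℝ) →L[ℝ] ℝ)
    (lam : Fin m → Eb n → ℝ)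
    (hstep : ∀ x : Eb n, (Φ x).1 = x.2)
    (hEL2 : ∀ (x : Eb n) (δq : Fin n → ℝ),
      D2 L (Φ x) δq + D4 L x δq = ∑ a, lam a x * ω a x.2 δq)
    (hEL1 : ∀ x : Eb n, D1 L (Φ x) + D3 L x = 0)
    (x v : Eb n) :
    fderiv ℝ (fun y => L y + L (Φ y)) x v
      = (∑ a, lam a x * ω a x.2 v.2.2)
        + ThetaPlus L (Φ x) (fderiv ℝ Φ x v) - ThetaMinus L x v := by
  have hLd : Differentiable ℝ L := hL.differentiable (by simp)
  have hΦd : Differentiable ℝ Φ := hΦ.differentiable (by simp)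
  set w := fderiv ℝ Φ x v with hw
  have hcomp : fderiv ℝ (fun y => L (Φ y)) x v = fderiv ℝ L (Φ x) w := by
    rw [show (fun y => L (Φ y)) = L ∘ Φ from rfl, fderiv_comp x (hLd _) (hΦd x)]; rfl
  have hadd : fderiv ℝ (fun y => L y + L (Φ y)) x v
      = fderiv ℝ L x v + fderiv ℝ L (Φ x) w := by
    have hc2 : DifferentiableAt ℝ (fun y => L (Φ y)) x := (hLd (Φ x)).comp x (hΦd x)
    rw [fderiv_fun_add (hLd x) hc2]
    simp only [ContinuousLinearMap.add_apply]
    rw [hcomp]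
  have hw1 : w.1 = v.2 := dPhi_fst Φ hΦ hstep x v
  have hw11 : w.1.1 = v.2.1 := by rw [hw1]
  have hw12 : w.1.2 = v.2.2 := by rw [hw1]
  rw [hadd, fderiv_decomp L x v, fderiv_decomp L (Φ x) w]
  have e2 := hEL2 x v.2.2
  have e1 := hEL1 x
  simp only [ThetaPlus, ThetaMinus, hw11, hw12]
  have e1' : D1 L (Φ x) * v.2.1 = -(D3 L x * v.2.1) := by
    rw [show D1 L (Φ x) = -D3 L x from by linarith]; ring
  linarith

lemma routeA (L : Eb n → ℝ) (hL : ContDiff ℝ (⊤ : ℕ∞) L) (Φ : Eb n → Eb n) (hΦ : ContDiff ℝ (⊤ : ℕ∞) Φ)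
    (x w u : Eb n) :
    fderiv ℝ (fun y => ThetaPlus L (Φ y) (fderiv ℝ Φ y w)) x u
      = fderiv ℝ L (Φ x) ((((0:ℝ), (0:Fin n → ℝ)) : Qb n), (fderiv ℝ (fderiv ℝ Φ) x u w).2)
        + fderiv ℝ (fderiv ℝ L) (Φ x) (fderiv ℝ Φ x u)
            ((((0:ℝ), (0:Fin n → ℝ)) : Qb n), (fderiv ℝ Φ x w).2) := by
  have hΦd := hΦ.differentiable (by simp)
  have hDL : DifferentiableAt ℝ (fderiv ℝ L) (Φ x) :=
    (hL.fderiv_right (m := 1) (WithTop.coe_le_coe.mpr le_top)).differentiable one_ne_zero (Φ x)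
  have hDΦ : DifferentiableAt ℝ (fderiv ℝ Φ) x :=
    (hΦ.fderiv_right (m := 1) (WithTop.coe_le_coe.mpr le_top)).differentiable one_ne_zero x
  set P : Eb n →L[ℝ] Eb n :=
    (ContinuousLinearMap.inr ℝ (Qb n) (Qb n)).comp (ContinuousLinearMap.snd ℝ (Qb n) (Qb n)) with hP
  have hPapp : ∀ z : Eb n, P z = ((((0:ℝ), (0:Fin n → ℝ)) : Qb n), z.2) := fun z => rfl
  have heq : (fun y => ThetaPlus L (Φ y) (fderiv ℝ Φ y w))
      = fun y => (fderiv ℝ L (Φ y)) (P (fderiv ℝ Φ y w)) :=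
    funext fun y => by rw [thetaPlus_eq, hPapp]
  have hc : HasFDerivAt (fun y => fderiv ℝ L (Φ y))
      ((fderiv ℝ (fderiv ℝ L) (Φ x)).comp (fderiv ℝ Φ x)) x :=
    hDL.hasFDerivAt.comp x (hΦd x).hasFDerivAt
  have hb0 := hDΦ.hasFDerivAt.clm_apply (hasFDerivAt_const w x)
  have hb := P.hasFDerivAt.comp x hb0
  have htot := (hc.clm_apply hb).fderiv
  simp only [Function.comp_def] at htot
  rw [heq, htot]
  simp [hPapp]

end Stmt14Aux

/-- evolution of the symplectic form under the nonholonomic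
integrator.  Here `ω a` are the one-forms on `Q̄` (with no `dt` component)
spanning the annihilator `𝒟^o`, `lam a` the smooth Lagrange multipliers, and
`Φ` maps `x = (t₀,q₀,t₁,q₁)` to `(t₁,q₁,t₂,q₂)` satisfying the EDLA equations.
With `β_d(x)·v = λ_a(x) ω^a(t₁,q₁)·δq₁` (the pullback of `λ_a ω^a` via
`(t₁,q₁)`), the two-step action `S̃(x) = L_d(x) + L_d(Φ(x))` satisfies
`dS̃ = β_d + Φ^*Θ⁺ − Θ⁻`, and consequently `Φ^*Ω = Ω + dβ_d`. -/
theorem stmt14 (n m : ℕ) (L : Eb n → ℝ) (hL : ContDiff ℝ (⊤ : ℕ∞) L)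
    (Φ : Eb n → Eb n) (hΦ : ContDiff ℝ (⊤ : ℕ∞) Φ)
    (ω : Fin m → Qb n → (Fin n → ℝ) →L[ℝ] ℝ)
    (hω : ∀ a, ContDiff ℝ (⊤ : ℕ∞) (ω a))
    (lam : Fin m → Eb n → ℝ)
    (hlam : ∀ a, ContDiff ℝ (⊤ : ℕ∞) (lam a))
    (hstep : ∀ x : Eb n, (Φ x).1 = x.2)
    (hEL2 : ∀ (x : Eb n) (δq : Fin n → ℝ),
      D2 L (Φ x) δq + D4 L x δq = ∑ a, lam a x * ω a x.2 δq)
    (hEL1 : ∀ x : Eb n, D1 L (Φ x) + D3 L x = 0) :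
    (∀ x v : Eb n,
      fderiv ℝ (fun y => L y + L (Φ y)) x v
        = (∑ a, lam a x * ω a x.2 v.2.2)
          + ThetaPlus L (Φ x) (fderiv ℝ Φ x v) - ThetaMinus L x v) ∧
    (∀ x u v : Eb n,
      OmegaL L (Φ x) (fderiv ℝ Φ x u) (fderiv ℝ Φ x v)
        = OmegaL L x u v
          + (fderiv ℝ (fun y : Eb n => ∑ a, lam a y * ω a y.2 v.2.2) x u
              - fderiv ℝ (fun y : Eb n => ∑ a, lam a y * ω a y.2 u.2.2) x v)) := by
  
  constructor
  · exact Stmt14Aux.part1 L hL Φ hΦ ω lam hstep hEL2 hEL1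
  intro x u v
  have hS : ContDiff ℝ (⊤ : ℕ∞) (fun y => L y + L (Φ y)) := hL.add (hL.comp hΦ)
  set S : Eb n → ℝ := fun y => L y + L (Φ y) with hSdef
  have hβd : ∀ c : Fin n → ℝ,
      DifferentiableAt ℝ (fun y : Eb n => ∑ a, lam a y * ω a y.2 c) x := by
    intro c
    refine DifferentiableAt.fun_sum fun a _ => DifferentiableAt.mul
      ((hlam a).differentiable (by simp) x) ?_
    exact ((((hω a).comp contDiff_snd).differentiable (by simp) x)).clm_apply
      (differentiableAt_const c)
  have key : ∀ w a : Eb n,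
      fderiv ℝ L (Φ x) ((((0:ℝ), (0:Fin n → ℝ)) : Qb n), (fderiv ℝ (fderiv ℝ Φ) x a w).2)
        + fderiv ℝ (fderiv ℝ L) (Φ x) (fderiv ℝ Φ x a)
            ((((0:ℝ), (0:Fin n → ℝ)) : Qb n), (fderiv ℝ Φ x w).2)
      = fderiv ℝ (fderiv ℝ S) x a w
        - fderiv ℝ (fun y : Eb n => ∑ b, lam b y * ω b y.2 w.2.2) x a
        - fderiv ℝ (fderiv ℝ L) x a (w.1, (((0:ℝ), (0:Fin n → ℝ)) : Qb n)) := by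
    intro w a
    rw [← Stmt14Aux.routeA L hL Φ hΦ x w a]
    have hfun : (fun y => ThetaPlus L (Φ y) (fderiv ℝ Φ y w))
        = fun y => (fderiv ℝ S y w - ∑ b, lam b y * ω b y.2 w.2.2) + ThetaMinus L y w := by
      funext y
      have h := Stmt14Aux.part1 L hL Φ hΦ ω lam hstep hEL2 hEL1 y w
      rw [← hSdef] at h
      linarith
    rw [hfun]
    have d1 : DifferentiableAt ℝ (fun y => fderiv ℝ S y w) x :=
      ((hS.fderiv_right (m := 1) (WithTop.coe_le_coe.mpr le_top)).differentiable one_ne_zero x).clm_apply (differentiableAt_const w)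
    have d2 := hβd w.2.2
    have d3 : DifferentiableAt ℝ (fun y => ThetaMinus L y w) x := by
      rw [show (fun y => ThetaMinus L y w)
          = fun y => -(fderiv ℝ L y (w.1, (((0:ℝ), (0:Fin n → ℝ)) : Qb n))) from
        funext fun y => Stmt14Aux.thetaMinus_eq L y w]
      exact (((hL.fderiv_right (m := 1) (WithTop.coe_le_coe.mpr le_top)).differentiable one_ne_zero x).clm_apply
        (differentiableAt_const _)).neg
    rw [fderiv_fun_add (d1.fun_sub d2) d3, fderiv_fun_sub d1 d2]
    simp only [ContinuousLinearMap.add_apply, ContinuousLinearMap.sub_apply]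
    rw [Stmt14Aux.fderiv_clm_apply_const S hS, Stmt14Aux.fderiv_thetaMinus L hL]
    ring
  have hΦd := hΦ.differentiable (by simp)
  have symΦ : fderiv ℝ (fderiv ℝ Φ) x u v = fderiv ℝ (fderiv ℝ Φ) x v u :=
    second_derivative_symmetric (fun y => (hΦd y).hasFDerivAt)
      (((hΦ.fderiv_right (m := 1) (WithTop.coe_le_coe.mpr le_top)).differentiable one_ne_zero x).hasFDerivAt) u v
  have symS : fderiv ℝ (fderiv ℝ S) x u v = fderiv ℝ (fderiv ℝ S) x v u :=
    second_derivative_symmetric (fun y => (hS.differentiable (by simp) y).hasFDerivAt)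
      (((hS.fderiv_right (m := 1) (WithTop.coe_le_coe.mpr le_top)).differentiable one_ne_zero x).hasFDerivAt) u v
  have symL : fderiv ℝ (fderiv ℝ L) x u v = fderiv ℝ (fderiv ℝ L) x v u :=
    second_derivative_symmetric (fun y => (hL.differentiable (by simp) y).hasFDerivAt)
      (((hL.fderiv_right (m := 1) (WithTop.coe_le_coe.mpr le_top)).differentiable one_ne_zero x).hasFDerivAt) u v
  have hsplit : ∀ a b : Eb n,
      fderiv ℝ (fderiv ℝ L) x a (b.1, (((0:ℝ), (0:Fin n → ℝ)) : Qb n))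
        = fderiv ℝ (fderiv ℝ L) x a b
          - fderiv ℝ (fderiv ℝ L) x a ((((0:ℝ), (0:Fin n → ℝ)) : Qb n), b.2) := by
    intro a b
    rw [show (b.1, (((0:ℝ), (0:Fin n → ℝ)) : Qb n))
        = b - ((((0:ℝ), (0:Fin n → ℝ)) : Qb n), b.2) from by ext <;> simp, map_sub]
  have K1 := key v u
  have K2 := key u v
  have e1 : fderiv ℝ L (Φ x) ((((0:ℝ), (0:Fin n → ℝ)) : Qb n), (fderiv ℝ (fderiv ℝ Φ) x u v).2)
      = fderiv ℝ L (Φ x) ((((0:ℝ), (0:Fin n → ℝ)) : Qb n), (fderiv ℝ (fderiv ℝ Φ) x v u).2) := by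
    rw [symΦ]
  have s1 := hsplit u v
  have s2 := hsplit v u
  rw [Stmt14Aux.omega_eq L hL (Φ x), Stmt14Aux.omega_eq L hL x]
  linarith
end
end

section
/- Energy conservation for autonomous discrete nonholonomic systems: Let (L_d, 𝒟_d, 𝒟) on Q̄ = ℝ × ℝ^n be such that L_d, 𝒟, 𝒟_d are invariant under time translation ψ_s(t,q) = (t+s, q), and suppose the distribution 𝒟 contains the time direction: (1, 0) ∈ 𝒟_{(t,q)} for every (t,q) (so time translation is a horizontal symmetry). If a sequence (t_k, q_k) satisfies the extended discrete Lagrange–d'Alembert equations — in particular the time equation D₁L_d(t_k,q_k,t_{k+1},q_{k+1}) + D₃L_d(t_{k−1},q_{k−1},t_k,q_k) = 0 — then the discrete energy E⁺ = −D₃L_d is conserved: E⁺(t_k,q_k,t_{k+1},q_{k+1}) = E⁺(t_{k−1},q_{k−1},t_k,q_k) for all k. -/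
noncomputable section

lemma auton_sum {n : ℕ} (L : Eb n → ℝ) (hL : Differentiable ℝ L)
    (hLt : ∀ (s t₀ t₁ : ℝ) (q₀ q₁ : Fin n → ℝ),
      L ((t₀ + s, q₀), (t₁ + s, q₁)) = L ((t₀, q₀), (t₁, q₁)))
    (x : Eb n) :
    fderiv ℝ L x ((1, 0), (0, 0)) + fderiv ℝ L x ((0, 0), (1, 0)) = 0 := by
  set v : Eb n := ((1, 0), (1, 0)) with hv
  have hφ : HasDerivAt (fun s : ℝ => x + s • v) v 0 := by
    simpa using ((hasDerivAt_id (0 : ℝ)).smul_const v).const_add x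
  have hx0 : x + (0 : ℝ) • v = x := by simp
  have hg : HasDerivAt (fun s : ℝ => L (x + s • v)) (fderiv ℝ L x v) 0 := by
    have hL' : HasFDerivAt L (fderiv ℝ L x) (x + (0 : ℝ) • v) :=
      by rw [hx0]; exact (hL x).hasFDerivAt
    exact hL'.comp_hasDerivAt 0 hφ
  have hconst : (fun s : ℝ => L (x + s • v)) = fun _ => L x := by
    funext s
    have : x + s • v = ((x.1.1 + s, x.1.2), (x.2.1 + s, x.2.2)) := by
      simp [hv, Prod.ext_iff]
    rw [this]
    exact hLt s x.1.1 x.2.1 x.1.2 x.2.2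
  have h0 : fderiv ℝ L x v = 0 := by
    have := hg
    rw [hconst] at this
    have h' := (hasDerivAt_const (0:ℝ) (L x)).unique this
    linarith [h']
  have hsplit : v = (((1 : ℝ), (0 : Fin n → ℝ)), ((0:ℝ), (0 : Fin n → ℝ)))
      + (((0:ℝ), (0 : Fin n → ℝ)), ((1:ℝ), (0 : Fin n → ℝ))) := by
    simp [hv, Prod.ext_iff]
  rw [hsplit] at h0
  rw [map_add] at h0
  exact h0

/-- energy conservation for autonomous discrete nonholonomic
systems.  If `L_d`, `𝒟` and `𝒟_d` are invariant under time translation and the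
distribution `𝒟` contains the time direction `(1,0)` (so time translation is a
horizontal symmetry), then along any solution of the extended discrete
Lagrange–d'Alembert equations the discrete energy `E⁺ = −D₃L_d` is conserved. -/
theorem stmt15 (n N : ℕ) (L : Eb n → ℝ) (hL : ContDiff ℝ (⊤ : ℕ∞) L)
    (𝒟 : Qb n → Submodule ℝ (Qb n)) (𝒟d : Set (Eb n))
    (hLt : ∀ (s t₀ t₁ : ℝ) (q₀ q₁ : Fin n → ℝ),
      L ((t₀ + s, q₀), (t₁ + s, q₁)) = L ((t₀, q₀), (t₁, q₁)))
    (h𝒟t : ∀ (s t : ℝ) (q : Fin n → ℝ), 𝒟 (t + s, q) = 𝒟 (t, q))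
    (h𝒟dt : ∀ (s : ℝ) (x y : Qb n),
      (x, y) ∈ 𝒟d → ((x.1 + s, x.2), (y.1 + s, y.2)) ∈ 𝒟d)
    (htime : ∀ x : Qb n, ((1 : ℝ), (0 : Fin n → ℝ)) ∈ 𝒟 x)
    (c : ℕ → Qb n)
    (hEDLA1 : ∀ k, 1 ≤ k → k ≤ N - 1 → ∀ v ∈ 𝒟 (c k),
      fderiv ℝ L (c (k - 1), c k) ((0 : Qb n), v)
        + fderiv ℝ L (c k, c (k + 1)) (v, (0 : Qb n)) = 0)
    (hEDLA2 : ∀ k, k ≤ N - 1 → (c k, c (k + 1)) ∈ 𝒟d) :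
    ∀ k, 1 ≤ k → k ≤ N - 1 →
      Eplus L (c k, c (k + 1)) = Eplus L (c (k - 1), c k) := by
  intro k hk1 hkN
  have h := hEDLA1 k hk1 hkN ((1 : ℝ), (0 : Fin n → ℝ)) (htime (c k))
  have ha := auton_sum L (hL.differentiable (by simp)) hLt (c k, c (k + 1))
  have hz : ((0 : Qb n)) = (((0:ℝ), (0 : Fin n → ℝ))) := rfl
  rw [hz] at h
  simp only [Eplus, D3]
  linarith [h, ha]
end
end
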